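/- arXiv:2007.02989 — 2 statements merged into one kernel-verified Lean document; each statement's English description precedes it below -/
import Mathlib

section
/- Assume that (ξ/ξ')'(r) is bounded as r → ∞, that (ξ/ξ')''(r) / ((ξ/ξ')'(r)·(ξ(r)/ξ'(r))) → 0 as r → ∞, and that ξ(r)/ξ'(r) → ∞ as r → ∞. Let φ be an entire solution of the radial translating-soliton ODE on (R,∞), and define λ(r) = (ξ(r)/ξ'(r))·(φ(r) − (c/(n−1))·ξ(r)/ξ'(r)). Then λ(r) + (1/c)·(ξ/ξ')'(r) → 0 as r → ∞. -/
set_option maxHeartbeats 1000000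
open Filter Set

lemma contDiffAt_deriv' {f : ℝ → ℝ} {x : ℝ} (h : ContDiffAt ℝ (⊤ : ℕ∞) f x) :
    ContDiffAt ℝ (⊤ : ℕ∞) (deriv f) x := by
  rw [contDiffAt_infty] at h ⊢
  intro k
  obtain ⟨u, hu, hf⟩ := (h (k+1)).contDiffOn (m := ((k+1 : ℕ) : WithTop ℕ∞)) le_rfl (by simp)
  obtain ⟨v, hvu, hv, hxv⟩ := mem_nhds_iff.mp hu
  have hfv : ContDiffOn ℝ ((k+1 : ℕ) : WithTop ℕ∞) f v := hf.mono hvu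
  have : ContDiffOn ℝ (k : WithTop ℕ∞) (deriv f) v := hfv.deriv_of_isOpen hv (by push_cast; exact le_rfl)
  exact this.contDiffAt (hv.mem_nhds hxv)

lemma trap_lemma (f f' : ℝ → ℝ) (a δ x : ℝ) (hδ : 0 < δ)
    (hf : ∀ r, x ≤ r → HasDerivAt f (f' r) r)
    (hd : ∀ r, x ≤ r → a ≤ f r → f' r ≤ -δ) :
    ∀ᶠ r in atTop, f r ≤ a := by
  have hderiv : ∀ r, x ≤ r → deriv f r = f' r := fun r hr => (hf r hr).deriv
  have hcont : ∀ s : Set ℝ, s ⊆ Ici x → ContinuousOn f s := by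
    intro s hs r hr
    exact ((hf r (hs hr)).continuousAt).continuousWithinAt
  -- Step 1: there is a point where f ≤ a
  have step1 : ∃ r₁, x ≤ r₁ ∧ f r₁ ≤ a := by
    by_contra h
    push_neg at h
    have hall : ∀ r, x ≤ r → a < f r := fun r hr => h r hr
    have hg : AntitoneOn (fun r => f r + δ * r) (Ici x) := by
      apply antitoneOn_of_deriv_nonpos (convex_Ici x)
      · exact ((hcont _ (subset_refl _)).add (continuousOn_const.mul continuousOn_id))
      · intro y hy
        rw [interior_Ici] at hy
        have H : HasDerivAt (fun r => f r + δ * r) (f' y + δ * 1) y :=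
          (hf y (le_of_lt hy)).add ((hasDerivAt_id y).const_mul δ)
        exact H.differentiableAt.differentiableWithinAt
      · intro y hy
        rw [interior_Ici] at hy
        have H : HasDerivAt (fun r => f r + δ * r) (f' y + δ * 1) y :=
          (hf y (le_of_lt hy)).add ((hasDerivAt_id y).const_mul δ)
        rw [H.deriv]
        have := hd y (le_of_lt hy) (le_of_lt (hall y (le_of_lt hy)))
        linarith
    set r := max x (x + (f x - a) / δ + 1) with hrdef
    have hxr : x ≤ r := le_max_left _ _
    have hle := hg (self_mem_Ici) (mem_Ici.mpr hxr) hxr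
    simp only [] at hle
    have hrge : x + (f x - a) / δ + 1 ≤ r := le_max_right _ _
    have hdr : δ * r ≥ δ * x + (f x - a) + δ := by
      have h1 : δ * (x + (f x - a) / δ + 1) ≤ δ * r :=
        mul_le_mul_of_nonneg_left hrge (le_of_lt hδ)
      have h2 : δ * (x + (f x - a) / δ + 1) = δ * x + (f x - a) + δ := by
        field_simp
      linarith
    have : f r < a := by linarith
    linarith [hall r hxr]
  obtain ⟨r₁, hr₁x, hr₁⟩ := step1
  -- Step 2: f ≤ a for all r ≥ r₁
  rw [eventually_atTop]
  refine ⟨r₁, fun r hr => ?_⟩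
  by_contra hfr
  push_neg at hfr
  have hr₁r : r₁ < r := by
    rcases eq_or_lt_of_le hr with h | h
    · exfalso; rw [← h] at hfr; linarith
    · exact h
  set T := {t ∈ Icc r₁ r | f t ≤ a} with hT
  have hTne : T.Nonempty := ⟨r₁, ⟨left_mem_Icc.mpr (le_of_lt hr₁r), hr₁⟩⟩
  have hTbdd : BddAbove T := ⟨r, fun t ht => ht.1.2⟩
  have hTclosed : IsClosed T := by
    have hTeq : T = Icc r₁ r ∩ f ⁻¹' (Iic a) := by ext t; simp [hT]
    rw [hTeq]
    apply ContinuousOn.preimage_isClosed_of_isClosed (hcont _ ?_) isClosed_Icc isClosed_Iic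
    exact fun t ht => le_trans hr₁x ht.1
  set s := sSup T with hs
  have hsT : s ∈ T := hTclosed.csSup_mem hTne hTbdd
  have hsr : s < r := lt_of_le_of_ne hsT.1.2 (fun h => by rw [h] at hsT; linarith [hsT.2])
  have hmid : ∀ t, s < t → t ≤ r → a < f t := by
    intro t hst htr
    by_contra hle
    push_neg at hle
    have : t ∈ T := ⟨⟨le_trans hsT.1.1 (le_of_lt hst), htr⟩, hle⟩
    linarith [le_csSup hTbdd this]
  have hanti : StrictAntiOn f (Icc s r) := by
    apply strictAntiOn_of_deriv_neg (convex_Icc s r) (hcont _ ?_)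
    · intro t ht
      rw [interior_Icc] at ht
      have htx : x ≤ t := le_trans hr₁x (le_trans hsT.1.1 (le_of_lt ht.1))
      rw [hderiv t htx]
      have := hd t htx (le_of_lt (hmid t ht.1 (le_of_lt ht.2)))
      linarith
    · exact fun t ht => le_trans hr₁x (le_trans hsT.1.1 ht.1)
  have := hanti (left_mem_Icc.mpr (le_of_lt hsr)) (right_mem_Icc.mpr (le_of_lt hsr)) hsr
  linarith [hsT.2]


lemma estB (n1 M δ₀ α K₁ u u' p : ℝ) (hn0 : 0 < n1) (hu' : |u'| ≤ M) (hδ₀ : 0 < δ₀)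
    (hp : δ₀*u ≤ p) (hK : K₁ ≤ u) (hu1 : 1 ≤ u) (hKprod : 2*M ≤ n1*δ₀^2*K₁)
    (hα : 2*α = n1*δ₀^2) : α*u^2 ≤ n1*(1+p^2) - u' := by
  have hu'2 := (abs_le.mp hu').2
  have hδu : 0 ≤ δ₀ * u := by positivity
  have hp0 : 0 ≤ p := le_trans hδu hp
  have hpsq : δ₀^2 * u^2 ≤ p^2 := by
    nlinarith [mul_nonneg (sub_nonneg.mpr hp) (add_nonneg hp0 hδu)]
  have husq : K₁ ≤ u^2 := by nlinarith
  have h2M : 2*M ≤ n1*δ₀^2*u^2 := by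
    have e3 : n1*δ₀^2*K₁ ≤ n1*δ₀^2*u^2 := by
      apply mul_le_mul_of_nonneg_left husq (by positivity)
    linarith
  nlinarith [mul_le_mul_of_nonneg_left hpsq (le_of_lt hn0)]

lemma est2 (n1 c κ M α L₁ u u' p D : ℝ)
    (hκpos : 0 < κ) (hu : 0 < u) (hu1 : 1 ≤ u)
    (hu'M : |u'| ≤ M)
    (hB : α*u^2 ≤ n1*(1+p^2) - u')
    (hαpos : 0 < α) (hL₁pos : 0 < L₁)
    (hαL₁ : α*L₁ = κ*M + α)
    (hfr : L₁ ≤ u*(p - κ*u))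
    (hD : D = (u' - n1*(1+p^2))*(p - κ*u) - κ*u*u') :
    D ≤ -α := by
  have hμpos : L₁/u ≤ p - κ*u := by
    rw [div_le_iff₀ hu]
    linarith [hfr, (by ring : u*(p - κ*u) = (p - κ*u)*u)]
  have e4 : (0:ℝ) ≤ L₁ / u := le_of_lt (div_pos hL₁pos hu)
  have hbμ : α * u * L₁ ≤ (n1*(1+p^2) - u') * (p - κ*u) := by
    have h1 : α * u^2 * (L₁/u) ≤ (n1*(1+p^2) - u') * (p - κ*u) := by
      apply mul_le_mul hB hμpos e4
      nlinarith
    have h2 : α * u^2 * (L₁/u) = α * u * L₁ := by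
      field_simp
    linarith
  have hκuu' : -(κ * u * u') ≤ κ * u * M := by
    have h3 : -u' ≤ M := by linarith [(abs_le.mp hu'M).1]
    have e5 : (0:ℝ) ≤ κ * u := le_of_lt (mul_pos hκpos hu)
    calc -(κ * u * u') = κ * u * (-u') := by ring
    _ ≤ κ * u * M := mul_le_mul_of_nonneg_left h3 e5
  have hαL₁u : α * u * L₁ = κ*M*u + α*u := by linear_combination u * hαL₁
  have hαu : α ≤ α * u := by nlinarith
  have hDexp : D = -((n1*(1+p^2) - u') * (p - κ*u)) - κ*u*u' := by rw [hD]; ring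
  linarith

lemma est3 (n1 c κ M α L₁ u u' p D : ℝ)
    (hκpos : 0 < κ) (hu : 0 < u) (hu1 : 1 ≤ u)
    (hu'M : |u'| ≤ M)
    (hB : α*u^2 ≤ n1*(1+p^2) - u')
    (hαpos : 0 < α) (hL₁pos : 0 < L₁)
    (hαL₁ : α*L₁ = κ*M + α)
    (hfr : u*(p - κ*u) ≤ -L₁)
    (hD : D = (u' - n1*(1+p^2))*(p - κ*u) - κ*u*u') :
    -D ≤ -α := by
  have hμneg : p - κ*u ≤ -L₁/u := by
    rw [le_div_iff₀ hu]
    linarith [hfr, (by ring : u*(p - κ*u) = (p - κ*u)*u)]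
  have hμ0 : p - κ*u ≤ 0 := by
    have h7 : -L₁/u ≤ 0 := div_nonpos_of_nonpos_of_nonneg (by linarith) (le_of_lt hu)
    linarith
  have hbμ : (n1*(1+p^2) - u') * (p - κ*u) ≤ -(α * u * L₁) := by
    have h1 : (n1*(1+p^2) - u') * (p - κ*u) ≤ (α * u^2) * (p - κ*u) :=
      mul_le_mul_of_nonpos_right hB hμ0
    have e6 : (0:ℝ) ≤ α * u^2 := by positivity
    have h2 : (α * u^2) * (p - κ*u) ≤ (α * u^2) * (-L₁/u) :=
      mul_le_mul_of_nonneg_left hμneg e6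
    have h3 : (α * u^2) * (-L₁/u) = -(α * u * L₁) := by
      field_simp
    linarith
  have hκuu' : κ * u * u' ≤ κ * u * M :=
    mul_le_mul_of_nonneg_left (abs_le.mp hu'M).2 (le_of_lt (mul_pos hκpos hu))
  have hαL₁u : α * u * L₁ = κ*M*u + α*u := by linear_combination u * hαL₁
  have hαu : α ≤ α * u := by nlinarith
  have hDexp : -D = (n1*(1+p^2) - u') * (p - κ*u) + κ*u*u' := by rw [hD]; ring
  linarith

lemma second_deriv_bound (U : ℝ → ℝ) (x θ : ℝ) (hθ : 0 ≤ θ)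
    (hsm : ∀ r, x < r → ContDiffAt ℝ (⊤ : ℕ∞) U r)
    (hUne : ∀ r, x < r → U r ≠ 0)
    (h : ∀ r, x < r → |deriv (deriv U) r / (deriv U r * U r)| ≤ θ) :
    ∀ r, x < r → |deriv (deriv U) r| ≤ θ * (|deriv U r| * |U r|) := by
  have hpt : ∀ r, x < r → deriv U r * U r ≠ 0 →
      |deriv (deriv U) r| ≤ θ * (|deriv U r| * |U r|) := by
    intro r hr hne
    have h1 := h r hr
    rw [abs_div] at h1
    have h2 : 0 < |deriv U r * U r| := abs_pos.mpr hne
    rw [div_le_iff₀ h2] at h1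
    calc |deriv (deriv U) r| ≤ θ * |deriv U r * U r| := h1
    _ = θ * (|deriv U r| * |U r|) := by rw [abs_mul]
  intro r hr
  by_cases hne : deriv U r * U r ≠ 0
  · exact hpt r hr hne
  push_neg at hne
  set s : Set ℝ := {t | x < t ∧ deriv U t * U t ≠ 0} with hsdef
  by_cases hcl : r ∈ closure s
  · have hne' : (nhdsWithin r s).NeBot := mem_closure_iff_nhdsWithin_neBot.mp hcl
    have hU' : ContinuousAt (deriv U) r := (contDiffAt_deriv' (hsm r hr)).continuousAt
    have hU'' : ContinuousAt (deriv (deriv U)) r :=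
      (contDiffAt_deriv' (contDiffAt_deriv' (hsm r hr))).continuousAt
    have hUc : ContinuousAt U r := (hsm r hr).continuousAt
    have t1 : Filter.Tendsto (fun t => |deriv (deriv U) t|) (nhdsWithin r s)
        (nhds (|deriv (deriv U) r|)) :=
      (hU''.tendsto.mono_left nhdsWithin_le_nhds).abs
    have t2 : Filter.Tendsto (fun t => θ * (|deriv U t| * |U t|)) (nhdsWithin r s)
        (nhds (θ * (|deriv U r| * |U r|))) :=
      tendsto_const_nhds.mul (((hU'.tendsto.mono_left nhdsWithin_le_nhds).abs).mul
        ((hUc.tendsto.mono_left nhdsWithin_le_nhds).abs))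
    refine le_of_tendsto_of_tendsto t1 t2 ?_
    filter_upwards [self_mem_nhdsWithin] with t ht
    exact hpt t ht.1 ht.2
  · have hev1 : ∀ᶠ t in nhds r, t ∉ s :=
      eventually_of_mem (isClosed_closure.isOpen_compl.mem_nhds hcl)
        (fun t ht => fun hts => ht (subset_closure hts))
    have hev2 : ∀ᶠ t in nhds r, x < t := eventually_gt_nhds hr
    have hUcont : ContinuousAt U r := (hsm r hr).continuousAt
    have hev3 : ∀ᶠ t in nhds r, U t ≠ 0 := hUcont.eventually_ne (hUne r hr)
    have hev : deriv U =ᶠ[nhds r] (fun _ => (0:ℝ)) := by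
      filter_upwards [hev1, hev2, hev3] with t ht1 ht2 ht3
      by_contra hd
      exact ht1 ⟨ht2, mul_ne_zero hd ht3⟩
    have : deriv (deriv U) r = 0 := by
      rw [hev.deriv_eq, deriv_const]
    rw [this, abs_zero]
    positivity


lemma est4core (n1 c κ M α L₁ C₀ θ ε' K₂ u u' u'' p D ψv : ℝ)
    (hc : 0 < c) (hn1 : 1 ≤ n1) (hκc : κ * n1 = c) (hκpos : 0 < κ)
    (hαpos : 0 < α) (hL₁pos : 0 < L₁) (hM : 0 ≤ M)
    (hu1 : 1 ≤ u) (huK : K₂ ≤ u)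
    (hu'M : |u'| ≤ M)
    (hp0 : 0 ≤ p)
    (hB : α*u^2 ≤ n1*(1+p^2) - u')
    (hlam : |u*(p - κ*u)| ≤ L₁)
    (hu'' : |u''| ≤ θ*(M*u))
    (hC₀ : C₀ = n1*(1 + L₁*(2*κ + L₁)) + M)
    (hθ : θ = ε'*α*c/(2*(M+1)))
    (hε' : 0 < ε')
    (hK₂ : 2*(M*C₀/c + 1)/(α*ε') ≤ K₂)
    (hψ : ψv = u*(p - κ*u) + (1/c)*u')
    (hD : D = (u' - n1*(1+p^2))*(p - κ*u) - κ*u*u' + (1/c)*u'') :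
    (ε' ≤ ψv → D ≤ -1) ∧ (ψv ≤ -ε' → -D ≤ -1) := by
  have hu : (0:ℝ) < u := lt_of_lt_of_le one_pos hu1
  have hbpos : 0 < n1*(1+p^2) - u' := lt_of_lt_of_le (by positivity) hB
  have hidD : D = -((n1*(1+p^2) - u')/u)*ψv
      + u'*((n1*(1+p^2) - u') - c*κ*u^2)/(c*u) + u''/c := by
    rw [hD, hψ]
    field_simp
    ring
  have hL₁u : L₁ ≤ L₁ * u := by
    calc L₁ = L₁ * 1 := (mul_one L₁).symm
    _ ≤ L₁ * u := mul_le_mul_of_nonneg_left hu1 hL₁pos.le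
  have hμ : |p - κ*u| ≤ L₁/u := by
    rw [abs_mul, abs_of_pos hu] at hlam
    rw [le_div_iff₀ hu, mul_comm]
    exact hlam
  have hμ' : |p - κ*u| ≤ L₁ := le_trans hμ (by rw [div_le_iff₀ hu]; linarith)
  have hpub : p ≤ κ*u + L₁ := by
    have := (abs_le.mp hμ').2
    linarith
  have hsum : 0 ≤ p + κ*u := by positivity
  have hsumub : p + κ*u ≤ (2*κ + L₁)*u := by nlinarith
  have hprodabs : |(p - κ*u)*(p + κ*u)| ≤ L₁*(2*κ + L₁) := by
    rw [abs_mul, abs_of_nonneg hsum]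
    calc |p - κ*u| * (p + κ*u) ≤ (L₁/u) * ((2*κ + L₁)*u) := by
          apply mul_le_mul hμ hsumub hsum (le_of_lt (div_pos hL₁pos hu))
    _ = L₁*(2*κ + L₁) := by
          field_simp
  have hexp : (n1*(1+p^2) - u') - c*κ*u^2 = n1*(1 + (p - κ*u)*(p + κ*u)) - u' := by
    linear_combination (κ*u^2) * hκc
  have hn0 : (0:ℝ) ≤ n1 := by linarith
  have hBC : |(n1*(1+p^2) - u') - c*κ*u^2| ≤ C₀ := by
    rw [hexp, hC₀, abs_le]
    have h1 := abs_le.mp hprodabs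
    have h2 := abs_le.mp hu'M
    have h3 : n1*(-(L₁*(2*κ+L₁))) ≤ n1*((p-κ*u)*(p+κ*u)) :=
      mul_le_mul_of_nonneg_left h1.1 hn0
    have h4 : n1*((p-κ*u)*(p+κ*u)) ≤ n1*(L₁*(2*κ+L₁)) :=
      mul_le_mul_of_nonneg_left h1.2 hn0
    constructor <;> linarith [h2.1, h2.2]
  have hcu : (0:ℝ) < c*u := mul_pos hc hu
  have hE : |u'*((n1*(1+p^2) - u') - c*κ*u^2)/(c*u)| ≤ M*C₀/(c*u) := by
    rw [abs_div, abs_of_pos hcu, abs_mul]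
    have h5 : |u'| * |(n1*(1+p^2) - u') - c*κ*u^2| ≤ M * C₀ :=
      mul_le_mul hu'M hBC (abs_nonneg _) hM
    gcongr
  have hC₀pos : 0 < C₀ := by rw [hC₀]; positivity
  have hEbound : M*C₀/(c*u) ≤ M*C₀/c := by
    apply div_le_div_of_nonneg_left (by positivity) hc
    calc c = c*1 := (mul_one c).symm
    _ ≤ c*u := mul_le_mul_of_nonneg_left hu1 hc.le
  have hαε' : (0:ℝ) < α*ε' := mul_pos hαpos hε'
  have hKprod : 2*(M*C₀/c + 1) ≤ K₂*(α*ε') := by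
    rw [div_le_iff₀ hαε'] at hK₂
    linarith
  have hhalf : M*C₀/c + 1 ≤ α*ε'*u/2 := by
    have h6 : K₂*(α*ε') ≤ u*(α*ε') := mul_le_mul_of_nonneg_right huK hαε'.le
    linarith
  have h13 : M*C₀/(c*u) + 1 ≤ α*ε'*u/2 := by linarith
  have h9 : |u''/c| ≤ α*ε'*u/2 := by
    rw [abs_div, abs_of_pos hc]
    have h7 : |u''|/c ≤ θ*(M*u)/c := by gcongr
    have h8 : θ*(M*u)/c = ε'*α*(M*u)/(2*(M+1)) := by
      rw [hθ]
      field_simp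
    have h10 : ε'*α*(M*u)/(2*(M+1)) ≤ α*ε'*u/2 := by
      rw [div_le_div_iff₀ (by positivity) (by norm_num)]
      linarith [mul_pos (mul_pos hαpos hε') hu]
    calc |u''|/c ≤ θ*(M*u)/c := h7
    _ = ε'*α*(M*u)/(2*(M+1)) := h8
    _ ≤ α*ε'*u/2 := h10
  have h9' := abs_le.mp h9
  have hbu : α*u ≤ (n1*(1+p^2) - u')/u := by
    rw [le_div_iff₀ hu]
    linarith [hB]
  have hbu0 : (0:ℝ) ≤ (n1*(1+p^2) - u')/u := le_of_lt (div_pos hbpos hu)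
  have hE' := abs_le.mp hE
  constructor
  · intro hup
    have h14 : (α*u)*ε' ≤ ((n1*(1+p^2) - u')/u)*ψv :=
      mul_le_mul hbu hup hε'.le hbu0
    rw [hidD]
    linarith [h14, hE'.2, h9'.2, h13]
  · intro hdn
    have h14 : ((n1*(1+p^2) - u')/u)*ψv ≤ (α*u)*(-ε') := by
      have h15 : ((n1*(1+p^2) - u')/u)*ψv ≤ ((n1*(1+p^2) - u')/u)*(-ε') :=
        mul_le_mul_of_nonneg_left hdn hbu0
      have h16 : ((n1*(1+p^2) - u')/u)*(-ε') ≤ (α*u)*(-ε') :=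
        mul_le_mul_of_nonpos_right hbu (by linarith)
      linarith
    rw [hidD]
    linarith [h14, hE'.1, h9'.1, h13]

/-- Let `n ≥ 2`, `c > 0`, and let `ξ` be a warping function of a
rotationally symmetric Cartan–Hadamard manifold (`ξ 0 = 0`, `ξ' 0 = 1`, `ξ'' ≥ 0`,
hence `ξ > 0` and `ξ' ≥ 1` on `(0,∞)`).  Assume `(ξ/ξ')'` is bounded at infinity,
`(ξ/ξ')''(r)/((ξ/ξ')'(r)·(ξ/ξ')(r)) → 0`, and `ξ/ξ' → ∞`.  Let `φ` be an entire
solution on `(R,∞)` of the radial translating-soliton ODE, and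
`λ(r) = (ξ/ξ')(r)·(φ(r) − (c/(n−1))·(ξ/ξ')(r))`.  Then
`λ(r) + (1/c)·(ξ/ξ')'(r) → 0` as `r → ∞`. -/
theorem soliton_ode_second_order_asymptotics
    (n : ℕ) (hn : 2 ≤ n) (c : ℝ) (hc : 0 < c)
    (ξ : ℝ → ℝ) (hξ_smooth : ContDiff ℝ (⊤ : ℕ∞) ξ)
    (hξ0 : ξ 0 = 0) (hξ'0 : deriv ξ 0 = 1)
    (hξ'' : ∀ r, 0 ≤ r → 0 ≤ deriv (deriv ξ) r)
    (hξ_pos : ∀ r, 0 < r → 0 < ξ r)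
    (hξ'_ge : ∀ r, 0 < r → 1 ≤ deriv ξ r)
    (hbdd : ∃ M : ℝ, ∀ᶠ r in atTop, |deriv (fun s => ξ s / deriv ξ s) r| ≤ M)
    (hsecond : Tendsto (fun r =>
      deriv (deriv (fun s => ξ s / deriv ξ s)) r /
        (deriv (fun s => ξ s / deriv ξ s) r * (ξ r / deriv ξ r)))
      atTop (nhds 0))
    (hratio : Tendsto (fun r => ξ r / deriv ξ r) atTop atTop)
    (φ : ℝ → ℝ) (R : ℝ) (hR : 0 ≤ R)
    (hode : ∀ r, R < r →
      HasDerivAt φ ((1 + (φ r)^2) * (c - ((n : ℝ) - 1) * (deriv ξ r / ξ r) * φ r)) r) :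
    Tendsto (fun r =>
      (ξ r / deriv ξ r) * (φ r - (c / ((n : ℝ) - 1)) * (ξ r / deriv ξ r))
        + (1 / c) * deriv (fun s => ξ s / deriv ξ s) r)
      atTop (nhds 0) := by
  -- basic numeric facts
  have hn1 : (1:ℝ) ≤ (n:ℝ) - 1 := by
    have : (2:ℝ) ≤ (n:ℝ) := by exact_mod_cast hn
    linarith
  have hn0 : (0:ℝ) < (n:ℝ) - 1 := lt_of_lt_of_le one_pos hn1
  set U : ℝ → ℝ := fun s => ξ s / deriv ξ s with hUdef
  set κ : ℝ := c / ((n:ℝ) - 1) with hκdef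
  have hκpos : 0 < κ := div_pos hc hn0
  have hκc : κ * ((n:ℝ) - 1) = c := div_mul_cancel₀ c (ne_of_gt hn0)
  -- smoothness and positivity of U
  have hξ'pos : ∀ r, 0 < r → 0 < deriv ξ r := fun r hr => lt_of_lt_of_le one_pos (hξ'_ge r hr)
  have hCD : ∀ r, 0 < r → ContDiffAt ℝ (⊤ : ℕ∞) U r := by
    intro r hr
    exact (hξ_smooth.contDiffAt).div (contDiffAt_deriv' hξ_smooth.contDiffAt)
      (ne_of_gt (hξ'pos r hr))
  have hUpos : ∀ r, 0 < r → 0 < U r := fun r hr => div_pos (hξ_pos r hr) (hξ'pos r hr)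
  have hUne : ∀ r, 0 < r → U r ≠ 0 := fun r hr => ne_of_gt (hUpos r hr)
  have hUdiff : ∀ r, 0 < r → HasDerivAt U (deriv U r) r := fun r hr =>
    ((hCD r hr).differentiableAt (by simp)).hasDerivAt
  have hU'diff : ∀ r, 0 < r → HasDerivAt (deriv U) (deriv (deriv U) r) r := fun r hr =>
    ((contDiffAt_deriv' (hCD r hr)).differentiableAt (by simp)).hasDerivAt
  have hinv : ∀ r, 0 < r → deriv ξ r / ξ r = 1 / U r := by
    intro r hr
    rw [hUdef]
    simp only [one_div_div]
  -- second derivative quotient written with U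
  have hsecondU : Tendsto (fun r =>
      deriv (deriv U) r / (deriv U r * U r)) atTop (nhds 0) := hsecond
  -- the soliton derivative
  set P' : ℝ → ℝ := fun r => (1 + (φ r)^2) * (c - ((n : ℝ) - 1) * (deriv ξ r / ξ r) * φ r)
    with hP'def
  have hP'app : ∀ r, P' r =
      (1 + (φ r)^2) * (c - ((n : ℝ) - 1) * (deriv ξ r / ξ r) * φ r) := fun r => rfl
  have hφdiff : ∀ r, R < r → HasDerivAt φ (P' r) r := hode
  -- lam and its derivative
  set lam : ℝ → ℝ := fun r => U r * (φ r - κ * U r) with hlamdef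
  set Dlam : ℝ → ℝ := fun r => deriv U r * (φ r - κ * U r) + U r * (P' r - κ * deriv U r)
    with hDlamdef
  have hlamapp : ∀ r, lam r = U r * (φ r - κ * U r) := fun r => rfl
  have hDlamapp : ∀ r, Dlam r =
      deriv U r * (φ r - κ * U r) + U r * (P' r - κ * deriv U r) := fun r => rfl
  have hlamdiff : ∀ r, max R 0 < r → HasDerivAt lam (Dlam r) r := by
    intro r hr
    have h0 : (0:ℝ) < r := lt_of_le_of_lt (le_max_right R 0) hr
    have hrR : R < r := lt_of_le_of_lt (le_max_left R 0) hr
    exact (hUdiff r h0).mul ((hφdiff r hrR).sub ((hUdiff r h0).const_mul κ))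
  set ψ : ℝ → ℝ := fun r => lam r + (1/c) * deriv U r with hψdef
  have hψapp : ∀ r, ψ r = U r * (φ r - κ * U r) + (1/c) * deriv U r := fun r => rfl
  have hψdiff : ∀ r, max R 0 < r → HasDerivAt ψ (Dlam r + (1/c) * deriv (deriv U) r) r := by
    intro r hr
    have h0 : (0:ℝ) < r := lt_of_le_of_lt (le_max_right R 0) hr
    exact (hlamdiff r hr).add ((hU'diff r h0).const_mul (1/c))
  show Tendsto ψ atTop (nhds 0)
  -- from now on, all the local definitions are opaque
  clear_value U κ P' lam Dlam ψ
  have hid1 : ∀ r, max R 0 < r → Dlam r =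
      (deriv U r - ((n:ℝ)-1)*(1 + (φ r)^2)) * (φ r - κ * U r) - κ * U r * deriv U r := by
    intro r hr
    have h0 : (0:ℝ) < r := lt_of_le_of_lt (le_max_right R 0) hr
    have hU0 : U r ≠ 0 := hUne r h0
    rw [hDlamapp r, hP'app r, hinv r h0, ← hκc]
    field_simp
    ring
  -- constants
  obtain ⟨M₀, hM₀⟩ := hbdd
  set M : ℝ := max M₀ 0 with hMdef
  have hM : 0 ≤ M := le_max_right _ _
  have hMev : ∀ᶠ r in atTop, |deriv U r| ≤ M :=
    hM₀.mono (fun r hr => le_trans hr (le_max_left _ _))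
  clear_value M
  have hMn : (0:ℝ) < M + n := by
    have : (2:ℝ) ≤ (n:ℝ) := by exact_mod_cast hn
    linarith
  set δ₀ : ℝ := c / (2*(M + n)) with hδ₀def
  have hδ₀pos : 0 < δ₀ := div_pos hc (by linarith)
  set η : ℝ := c * n / (2*(M + n)) with hηdef
  have hηpos : 0 < η := by
    apply div_pos
    · have : (2:ℝ) ≤ (n:ℝ) := by exact_mod_cast hn
      nlinarith
    · linarith
  have hδMη : δ₀ * M - c/2 = -η := by rw [hδ₀def, hηdef]; field_simp; ring
  have hδ₀n : ((n:ℝ)-1) * δ₀ ≤ c/2 := by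
    have e1 : ((n:ℝ)-1) ≤ M + (n:ℝ) := by linarith
    calc ((n:ℝ)-1) * δ₀ ≤ (M+(n:ℝ)) * δ₀ :=
          mul_le_mul_of_nonneg_right e1 (le_of_lt hδ₀pos)
    _ = c/2 := by rw [hδ₀def]; field_simp
  clear_value δ₀ η
  set α : ℝ := ((n:ℝ) - 1) * δ₀^2 / 2 with hαdef
  have hαpos : 0 < α := by positivity
  set L₁ : ℝ := κ * M / α + 1 with hL₁def
  have hL₁pos : 0 < L₁ := by positivity
  have hαL₁ : α * L₁ = κ*M + α := by
    rw [hL₁def]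
    field_simp
  set C₀ : ℝ := ((n:ℝ) - 1) * (1 + L₁*(2*κ + L₁)) + M with hC₀def
  have hC₀pos : 0 < C₀ := by positivity
  set K₁ : ℝ := (2*M + 2)/(((n:ℝ) - 1)*δ₀^2) + 1 with hK₁def
  have hK₁one : 1 ≤ K₁ := by
    rw [hK₁def]
    have : 0 ≤ (2*M + 2)/(((n:ℝ) - 1)*δ₀^2) := by positivity
    linarith
  have hK₁prod : 2*M ≤ ((n:ℝ) - 1)*δ₀^2*K₁ := by
    have heq : ((n:ℝ) - 1)*δ₀^2*K₁ = (2*M + 2) + ((n:ℝ) - 1)*δ₀^2 := by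
      rw [hK₁def]
      field_simp
    nlinarith [sq_nonneg δ₀, hδ₀pos, hn0]
  have hαval : 2 * α = ((n:ℝ) - 1) * δ₀^2 := by rw [hαdef]; ring
  clear_value α L₁ C₀ K₁
  -- Trap 1 : φ is eventually at least δ₀ U
  have htrap1 : ∀ᶠ r in atTop, δ₀ * U r - φ r ≤ 0 := by
    have hev : ∀ᶠ r in atTop, (|deriv U r| ≤ M ∧ max R 0 < r) ∧ 1 ≤ U r :=
      (hMev.and (eventually_gt_atTop _)).and (hratio.eventually_ge_atTop 1)
    obtain ⟨x₁, hx₁⟩ := eventually_atTop.mp hev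
    apply trap_lemma _ (fun r => δ₀ * deriv U r - P' r) 0 η x₁ hηpos
    · intro r hr
      obtain ⟨⟨hu', hrR0⟩, hu1⟩ := hx₁ r hr
      have h0 : (0:ℝ) < r := lt_of_le_of_lt (le_max_right R 0) hrR0
      have hrR : R < r := lt_of_le_of_lt (le_max_left R 0) hrR0
      exact ((hUdiff r h0).const_mul δ₀).sub (hφdiff r hrR)
    · intro r hr hfr
      obtain ⟨⟨hu', hrR0⟩, hu1⟩ := hx₁ r hr
      have h0 : (0:ℝ) < r := lt_of_le_of_lt (le_max_right R 0) hrR0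
      have hu : 0 < U r := hUpos r h0
      have hp : φ r ≤ δ₀ * U r := by linarith
      have hfrac : ((n:ℝ)-1) * (deriv ξ r / ξ r) * φ r ≤ c/2 := by
        rw [hinv r h0]
        have h1 : (1/U r) * φ r ≤ δ₀ := by
          have e2 : (0:ℝ) ≤ 1/U r := by positivity
          calc (1/U r) * φ r ≤ (1/U r) * (δ₀ * U r) :=
                mul_le_mul_of_nonneg_left hp e2
          _ = δ₀ := by field_simp
        calc ((n:ℝ)-1) * (1/U r) * φ r = ((n:ℝ)-1) * ((1/U r) * φ r) := by ring
        _ ≤ ((n:ℝ)-1) * δ₀ := mul_le_mul_of_nonneg_left h1 (le_of_lt hn0)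
        _ ≤ c/2 := hδ₀n
      have hP'lb : c/2 ≤ P' r := by
        rw [hP'app r]
        nlinarith [sq_nonneg (φ r)]
      have hδM : δ₀ * deriv U r ≤ δ₀ * M :=
        mul_le_mul_of_nonneg_left ((abs_le.mp hu').2) hδ₀pos.le
      show δ₀ * deriv U r - P' r ≤ -η
      linarith
  have hBlb : ∀ r, |deriv U r| ≤ M → δ₀ * U r ≤ φ r → K₁ ≤ U r → 1 ≤ U r →
      α * (U r)^2 ≤ ((n:ℝ)-1)*(1 + (φ r)^2) - deriv U r := by
    intro r hu' hp hK hu1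
    exact estB ((n:ℝ)-1) M δ₀ α K₁ (U r) (deriv U r) (φ r) hn0 hu' hδ₀pos hp hK hu1
      hK₁prod hαval
  -- region for traps 2 and 3
  have hev23 : ∀ᶠ r in atTop, (|deriv U r| ≤ M ∧ max R 0 < r) ∧
      (δ₀ * U r - φ r ≤ 0 ∧ K₁ ≤ U r) :=
    (hMev.and (eventually_gt_atTop _)).and (htrap1.and (hratio.eventually_ge_atTop K₁))
  obtain ⟨x₂, hx₂⟩ := eventually_atTop.mp hev23
  -- Trap 2 : lam eventually ≤ L₁
  have htrap2 : ∀ᶠ r in atTop, lam r ≤ L₁ := by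
    apply trap_lemma lam Dlam L₁ α x₂ hαpos
    · intro r hr
      exact hlamdiff r (hx₂ r hr).1.2
    · intro r hr hfr
      obtain ⟨⟨hu', hrR0⟩, hp', hK⟩ := hx₂ r hr
      have h0 : (0:ℝ) < r := lt_of_le_of_lt (le_max_right R 0) hrR0
      have hu : 0 < U r := hUpos r h0
      have hu1 : 1 ≤ U r := le_trans hK₁one hK
      have hB := hBlb r hu' (by linarith) hK hu1
      have hfr' : L₁ ≤ U r * (φ r - κ * U r) := by rw [hlamapp r] at hfr; exact hfr
      exact est2 ((n:ℝ)-1) c κ M α L₁ (U r) (deriv U r) (φ r) (Dlam r) hκpos hu hu1 hu'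
        hB hαpos hL₁pos hαL₁ hfr' (hid1 r hrR0)
  -- Trap 3 : lam eventually ≥ -L₁
  have htrap3 : ∀ᶠ r in atTop, -lam r ≤ L₁ := by
    apply trap_lemma (fun r => -lam r) (fun r => -Dlam r) L₁ α x₂ hαpos
    · intro r hr
      exact (hlamdiff r (hx₂ r hr).1.2).neg
    · intro r hr hfr
      obtain ⟨⟨hu', hrR0⟩, hp', hK⟩ := hx₂ r hr
      have h0 : (0:ℝ) < r := lt_of_le_of_lt (le_max_right R 0) hrR0
      have hu : 0 < U r := hUpos r h0
      have hu1 : 1 ≤ U r := le_trans hK₁one hK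
      have hB := hBlb r hu' (by linarith) hK hu1
      have hfr' : U r * (φ r - κ * U r) ≤ -L₁ := by
        have h6 : L₁ ≤ -lam r := hfr
        rw [hlamapp r] at h6
        linarith
      exact est3 ((n:ℝ)-1) c κ M α L₁ (U r) (deriv U r) (φ r) (Dlam r) hκpos hu hu1 hu'
        hB hαpos hL₁pos hαL₁ hfr' (hid1 r hrR0)
  have hlambdd : ∀ᶠ r in atTop, |lam r| ≤ L₁ :=
    (htrap2.and htrap3).mono (fun r hr => abs_le.mpr ⟨by linarith [hr.2], hr.1⟩)
  -- final stage
  rw [NormedAddCommGroup.tendsto_nhds_zero]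
  intro ε hε
  have hε' : 0 < ε/2 := by linarith
  set ε' : ℝ := ε/2 with hε'def
  set θ : ℝ := ε'*α*c/(2*(M+1)) with hθdef
  have hθpos : 0 < θ := by
    rw [hθdef]
    exact div_pos (mul_pos (mul_pos hε' hαpos) hc) (by linarith)
  have hqev : ∀ᶠ r in atTop, |deriv (deriv U) r / (deriv U r * U r)| ≤ θ := by
    have h := hsecondU.eventually_mem (Metric.closedBall_mem_nhds (0:ℝ) hθpos)
    refine h.mono (fun r hr => ?_)
    rwa [Metric.mem_closedBall, Real.dist_eq, sub_zero] at hr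
  obtain ⟨x₃, hx₃⟩ := eventually_atTop.mp hqev
  have hU''pt : ∀ r, max x₃ 0 < r → |deriv (deriv U) r| ≤ θ * (|deriv U r| * |U r|) := by
    apply second_deriv_bound U (max x₃ 0) θ hθpos.le
    · intro r hr
      exact hCD r (lt_of_le_of_lt (le_max_right x₃ 0) hr)
    · intro r hr
      exact hUne r (lt_of_le_of_lt (le_max_right x₃ 0) hr)
    · intro r hr
      exact hx₃ r (le_of_lt (lt_of_le_of_lt (le_max_left x₃ 0) hr))
  have hU''ev : ∀ᶠ r in atTop, |deriv (deriv U) r| ≤ θ * (M * U r) := by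
    filter_upwards [eventually_gt_atTop (max x₃ 0), hMev, eventually_gt_atTop (0:ℝ)]
      with r h1 h2 h3
    have h4 := hU''pt r h1
    have h5 : |U r| = U r := abs_of_pos (hUpos r h3)
    calc |deriv (deriv U) r| ≤ θ * (|deriv U r| * |U r|) := h4
    _ ≤ θ * (M * U r) := by
        rw [h5]
        apply mul_le_mul_of_nonneg_left ?_ hθpos.le
        exact mul_le_mul_of_nonneg_right h2 (hUpos r h3).le
  set K₂ : ℝ := max K₁ (2*(M*C₀/c + 1)/(α*ε')) with hK₂def
  have hK₂K₁ : K₁ ≤ K₂ := le_max_left _ _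
  have hK₂val : 2*(M*C₀/c + 1)/(α*ε') ≤ K₂ := le_max_right _ _
  have hev4 : ∀ᶠ r in atTop, ((|deriv U r| ≤ M ∧ max R 0 < r) ∧
      (δ₀ * U r - φ r ≤ 0 ∧ K₂ ≤ U r)) ∧
      (|lam r| ≤ L₁ ∧ |deriv (deriv U) r| ≤ θ * (M * U r)) :=
    ((hMev.and (eventually_gt_atTop _)).and (htrap1.and
      (hratio.eventually_ge_atTop K₂))).and (hlambdd.and hU''ev)
  obtain ⟨x₄, hx₄⟩ := eventually_atTop.mp hev4
  have hcore : ∀ r, x₄ ≤ r →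
      (ε' ≤ ψ r → Dlam r + (1/c) * deriv (deriv U) r ≤ -1) ∧
      (ψ r ≤ -ε' → -(Dlam r + (1/c) * deriv (deriv U) r) ≤ -1) := by
    intro r hr
    obtain ⟨⟨⟨hu', hrR0⟩, hp', hK⟩, hlamb, hu''⟩ := hx₄ r hr
    have h0 : (0:ℝ) < r := lt_of_le_of_lt (le_max_right R 0) hrR0
    have hu : 0 < U r := hUpos r h0
    have hu1 : 1 ≤ U r := le_trans hK₁one (le_trans hK₂K₁ hK)
    have hp : δ₀ * U r ≤ φ r := by linarith
    have hp0 : 0 ≤ φ r := le_trans (mul_nonneg hδ₀pos.le hu.le) hp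
    have hB := hBlb r hu' hp (le_trans hK₂K₁ hK) hu1
    have hlamb' : |U r * (φ r - κ * U r)| ≤ L₁ := by rw [hlamapp r] at hlamb; exact hlamb
    have hDeq : Dlam r + (1/c) * deriv (deriv U) r =
        (deriv U r - ((n:ℝ)-1)*(1 + (φ r)^2)) * (φ r - κ * U r) - κ * U r * deriv U r
          + (1/c) * deriv (deriv U) r := by rw [hid1 r hrR0]
    exact est4core ((n:ℝ)-1) c κ M α L₁ C₀ θ ε' K₂ (U r) (deriv U r)
      (deriv (deriv U) r) (φ r) _ _ hc hn1 hκc hκpos hαpos hL₁pos hM hu1 hK hu' hp0 hB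
      hlamb' hu'' hC₀def hθdef hε' hK₂val (hψapp r) hDeq
  have hupev : ∀ᶠ r in atTop, ψ r ≤ ε' := by
    apply trap_lemma ψ (fun r => Dlam r + (1/c) * deriv (deriv U) r) ε' 1 x₄ one_pos
    · intro r hr
      exact hψdiff r (hx₄ r hr).1.1.2
    · intro r hr h
      exact (hcore r hr).1 h
  have hdnev : ∀ᶠ r in atTop, -ψ r ≤ ε' := by
    apply trap_lemma (fun r => -ψ r) (fun r => -(Dlam r + (1/c) * deriv (deriv U) r))
      ε' 1 x₄ one_pos
    · intro r hr
      exact (hψdiff r (hx₄ r hr).1.1.2).neg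
    · intro r hr h
      exact (hcore r hr).2 (by linarith)
  filter_upwards [hupev, hdnev] with r h1 h2
  rw [Real.norm_eq_abs]
  have habs : |ψ r| ≤ ε' := abs_le.mpr ⟨by linarith, h1⟩
  rw [hε'def] at habs
  linarith
end

section
/- Let a : [0,∞) → [0,∞) be a smooth function with a(t) > 0 for all sufficiently large t, such that lim_{t→∞} a'(t)/a(t)² = 0 and ∫₀^∞ f_a(t)/f_a'(t) dt < ∞. Fix an integer n ≥ 2 and a constant c > 0. Then there exists a constant c₁ > 0 such that the function v(r) = (c₁/(n−1)) ∫₀^r f_a(t)/f_a'(t) dt is bounded on [0,∞) and satisfies the radial subsolution inequality v''(r)/(1 + v'(r)²) + (n−1)·(f_a'(r)/f_a(r))·v'(r) − c ≥ 0 for all r > 0. (This bounded radial subsolution is the key step in the construction of bounded entire translating solitons in Theorem 1.1.) -/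
open Filter MeasureTheory Set intervalIntegral Topology

/-- The candidate bounded radial subsolution
`v(r) = (c₁/(n−1)) ∫₀^r f_a(t)/f_a'(t) dt`. -/
noncomputable def radialSubsolution (c₁ : ℝ) (n : ℕ) (f : ℝ → ℝ) : ℝ → ℝ :=
  fun r => (c₁ / ((n : ℝ) - 1)) * ∫ t in (0:ℝ)..r, f t / deriv f t

set_option maxHeartbeats 2000000 in
/-- Let `a : [0,∞) → [0,∞)` be smooth with `a(t) > 0` for all
sufficiently large `t`, `a'(t)/a(t)² → 0`, and `∫₀^∞ f_a/f_a' < ∞`, where `f` is the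
Jacobi solution with `f 0 = 0`, `f' 0 = 1`, `f'' = a² f` (hence `f > 0`, `f' ≥ 1` on
`(0,∞)`).  Fix `n ≥ 2` and `c > 0`.  Then there is `c₁ > 0` such that
`v(r) = (c₁/(n−1)) ∫₀^r f/f'` is bounded on `[0,∞)` and satisfies
`v''/(1 + v'²) + (n−1)(f'/f)v' − c ≥ 0` on `(0,∞)`. -/
theorem bounded_radial_subsolution_exists
    (a f : ℝ → ℝ)
    (ha_smooth : ContDiff ℝ (⊤ : ℕ∞) a)
    (ha_nonneg : ∀ t, 0 ≤ t → 0 ≤ a t)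
    (t₀ : ℝ) (ha_pos : ∀ t, t₀ ≤ t → 0 < a t)
    (hf_smooth : ContDiff ℝ (⊤ : ℕ∞) f)
    (hf0 : f 0 = 0) (hf'0 : deriv f 0 = 1)
    (hjacobi : ∀ t, 0 ≤ t → deriv (deriv f) t = (a t)^2 * f t)
    (hf_pos : ∀ t, 0 < t → 0 < f t)
    (hf'_ge : ∀ t, 0 < t → 1 ≤ deriv f t)
    (hlim : Tendsto (fun t => deriv a t / (a t)^2) atTop (nhds 0))
    (hint : MeasureTheory.IntegrableOn (fun t => f t / deriv f t) (Set.Ici 0))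
    (n : ℕ) (hn : 2 ≤ n) (c : ℝ) (hc : 0 < c) :
    ∃ c₁ : ℝ, 0 < c₁ ∧
      (∃ M : ℝ, ∀ r, 0 ≤ r → |radialSubsolution c₁ n f r| ≤ M) ∧
      (∀ r, 0 < r →
        deriv (deriv (radialSubsolution c₁ n f)) r /
            (1 + (deriv (radialSubsolution c₁ n f) r)^2)
          + ((n : ℝ) - 1) * (deriv f r / f r) * deriv (radialSubsolution c₁ n f) r
          - c ≥ 0) := by
  set g : ℝ → ℝ := fun t => f t / deriv f t with hgdef
  have hfd : Differentiable ℝ f := hf_smooth.differentiable (by simp)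
  have hf'cd := (contDiff_infty_iff_deriv.mp (hf_smooth.of_le (by simp))).2
  have hf'd : Differentiable ℝ (deriv f) := hf'cd.differentiable (by norm_num)
  have had : Differentiable ℝ a := ha_smooth.differentiable (by simp)
  have hf'_pos : ∀ t : ℝ, 0 ≤ t → 0 < deriv f t := by
    intro t ht
    rcases eq_or_lt_of_le ht with h | h
    · rw [← h, hf'0]; norm_num
    · linarith [hf'_ge t h]
  have hg_nonneg : ∀ t : ℝ, 0 ≤ t → 0 ≤ g t := fun t ht => by
    rcases eq_or_lt_of_le ht with h | h
    · simp [hgdef, ← h, hf0]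
    · exact (div_pos (hf_pos t h) (hf'_pos t ht)).le
  have hg_pos : ∀ t : ℝ, 0 < t → 0 < g t := fun t ht =>
    div_pos (hf_pos t ht) (hf'_pos t ht.le)
  have hg_contOn : ContinuousOn g (Set.Ici 0) :=
    (hfd.continuous.continuousOn).div (hf'cd.continuous.continuousOn)
      (fun t ht => (hf'_pos t ht).ne')
  have hg_contAt : ∀ t : ℝ, 0 < t → ContinuousAt g t := fun t ht =>
    (hfd.continuous.continuousAt).div (hf'cd.continuous.continuousAt) (hf'_pos t ht.le).ne'
  have hg_deriv : ∀ t : ℝ, 0 < t → HasDerivAt g (1 - (a t)^2 * (g t)^2) t := by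
    intro t ht
    have h1 : HasDerivAt f (deriv f t) t := (hfd t).hasDerivAt
    have h2 : HasDerivAt (deriv f) ((a t)^2 * f t) t := by
      have h := (hf'd t).hasDerivAt
      rwa [hjacobi t ht.le] at h
    have hne : deriv f t ≠ 0 := (hf'_pos t ht.le).ne'
    have h3 : HasDerivAt g _ t := h1.div h2 hne
    convert h3 using 1
    simp only [hgdef]
    field_simp
  have hii : ∀ r : ℝ, 0 ≤ r → IntervalIntegrable g MeasureTheory.volume 0 r := by
    intro r hr
    rw [intervalIntegrable_iff_integrableOn_Ioc_of_le hr]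
    exact hint.mono_set (Set.Ioc_subset_Icc_self.trans (Set.Icc_subset_Ici_self))
  have hF_deriv : ∀ r : ℝ, 0 < r →
      HasDerivAt (fun s => ∫ t in (0:ℝ)..s, g t) (g r) r := by
    intro r hr
    exact intervalIntegral.integral_hasDerivAt_right (hii r hr.le)
      (ContinuousOn.stronglyMeasurableAtFilter isOpen_Ioi
        (hg_contOn.mono (Set.Ioi_subset_Ici le_rfl)) r hr)
      (hg_contAt r hr)
  set u : ℝ → ℝ := fun t => a t * g t with hudef
  have hu_deriv : ∀ t : ℝ, 0 < t →
      HasDerivAt u (deriv a t * g t + a t * (1 - (a t)^2 * (g t)^2)) t := fun t ht =>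
    ((had t).hasDerivAt.mul (hg_deriv t ht))
  have hu_contOn : ContinuousOn u (Set.Ici 0) := (had.continuous.continuousOn).mul hg_contOn
  have hIoi : IntegrableOn g (Set.Ioi 0) := hint.mono_set Set.Ioi_subset_Ici_self
  have hItend : Tendsto (fun b : ℝ => ∫ t in (0:ℝ)..b, g t) atTop
      (𝓝 (∫ t in Set.Ioi 0, g t)) :=
    MeasureTheory.intervalIntegral_tendsto_integral_Ioi 0 hIoi tendsto_id
  have hg_small : ∃ T : ℝ, 2 ≤ T ∧ ∀ t, T ≤ t → g t ≤ 1 := by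
    rcases Metric.tendsto_atTop.mp hItend (1/8) (by norm_num) with ⟨T', hT'⟩
    refine ⟨max 2 (T' + 1), le_max_left _ _, ?_⟩
    intro t ht
    by_contra hgt
    push_neg at hgt
    have ht2 : (2:ℝ) ≤ t := le_trans (le_max_left _ _) ht
    have htT' : T' ≤ t - 1/2 := by
      have := le_trans (le_max_right _ _) ht; linarith
    have hanti : AntitoneOn (fun s => g s - s) (Set.Icc (t - 1/2) t) := by
      apply antitoneOn_of_deriv_nonpos (convex_Icc _ _)
      · refine ((hg_contOn.mono ?_).sub continuousOn_id)
        intro x hx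
        simp only [Set.mem_Icc] at hx
        simp only [Set.mem_Ici]; linarith [hx.1]
      · intro x hx
        rw [interior_Icc] at hx
        have hx0 : (0:ℝ) < x := by simp only [Set.mem_Ioo] at hx; linarith [hx.1]
        have hD : HasDerivAt (fun s : ℝ => g s - s) ((1 - a x^2 * g x^2) - 1) x :=
          (hg_deriv x hx0).sub (hasDerivAt_id x)
        exact hD.differentiableAt.differentiableWithinAt
      · intro x hx
        rw [interior_Icc] at hx
        have hx0 : (0:ℝ) < x := by simp only [Set.mem_Ioo] at hx; linarith [hx.1]
        have hD : HasDerivAt (fun s : ℝ => g s - s) ((1 - a x^2 * g x^2) - 1) x :=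
          (hg_deriv x hx0).sub (hasDerivAt_id x)
        rw [hD.deriv]
        nlinarith [sq_nonneg (a x * g x)]
    have hglb : ∀ s ∈ Set.Icc (t - 1/2) t, (1:ℝ)/2 ≤ g s := by
      intro s hs
      have h1 := hanti hs (Set.right_mem_Icc.mpr (by linarith)) hs.2
      simp only at h1
      have := hs.1
      linarith
    have hint1 : IntervalIntegrable g MeasureTheory.volume (t - 1/2) t := by
      rw [intervalIntegrable_iff_integrableOn_Ioc_of_le (by linarith)]
      refine hint.mono_set ?_
      intro x hx
      simp only [Set.mem_Ioc] at hx
      simp only [Set.mem_Ici]; linarith [hx.1]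
    have hlow : (1:ℝ)/4 ≤ ∫ s in (t - 1/2)..t, g s := by
      have hm := intervalIntegral.integral_mono_on (f := fun _ => (1:ℝ)/2) (g := g)
        (by linarith) intervalIntegrable_const hint1 hglb
      rw [intervalIntegral.integral_const, smul_eq_mul] at hm
      linarith
    have hsplit : (∫ s in (0:ℝ)..(t-1/2), g s) + ∫ s in (t-1/2)..t, g s
        = ∫ s in (0:ℝ)..t, g s :=
      intervalIntegral.integral_add_adjacent_intervals (hii _ (by linarith)) hint1
    have h1 := hT' (t - 1/2) htT'
    have h2 := hT' t (by linarith)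
    rw [Real.dist_eq] at h1 h2
    have h1' := abs_lt.mp h1
    have h2' := abs_lt.mp h2
    linarith [h1'.1, h1'.2, h2'.1, h2'.2]
  have hε : ∃ T : ℝ, ∀ t, T ≤ t → |deriv a t / (a t)^2| ≤ 1/5 := by
    rcases Metric.tendsto_atTop.mp hlim (1/5) (by norm_num) with ⟨T, hT⟩
    refine ⟨T, fun t ht => ?_⟩
    have := hT t ht
    rw [Real.dist_eq, sub_zero] at this
    exact this.le
  obtain ⟨Tg, hTg2, hTg⟩ := hg_small
  obtain ⟨Tε, hTε⟩ := hε
  set T₀ : ℝ := max (max Tg Tε) (max 2 t₀) with hT₀def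
  have hT₀2 : (2:ℝ) ≤ T₀ := le_trans (le_max_left _ _) (le_max_right _ _)
  have hT₀pos : (0:ℝ) < T₀ := by linarith
  have hT₀g : ∀ t, T₀ ≤ t → g t ≤ 1 := fun t ht =>
    hTg t (le_trans (le_trans (le_max_left _ _) (le_max_left _ _)) ht)
  have hT₀ε : ∀ t, T₀ ≤ t → |deriv a t / (a t)^2| ≤ 1/5 := fun t ht =>
    hTε t (le_trans (le_trans (le_max_right _ _) (le_max_left _ _)) ht)
  have hT₀a : ∀ t, T₀ ≤ t → 0 < a t := fun t ht =>
    ha_pos t (le_trans (le_trans (le_max_right _ _) (le_max_right _ _)) ht)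
  have hkey : ∀ t, T₀ ≤ t → 6/5 ≤ u t →
      deriv a t * g t + a t * (1 - (a t)^2 * (g t)^2) ≤ -(6/25) := by
    intro t ht hx
    have htpos : 0 < t := lt_of_lt_of_le hT₀pos ht
    have hat : 0 < a t := hT₀a t ht
    have hgle : g t ≤ 1 := hT₀g t ht
    have hgt0 : 0 < g t := hg_pos t htpos
    have hs2 := (abs_le.mp (hT₀ε t ht)).2
    have hxu : (6:ℝ)/5 ≤ a t * g t := hx
    have ha65 : (6:ℝ)/5 ≤ a t := by nlinarith
    have hd1 : deriv a t ≤ (1/5) * (a t)^2 := by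
      rw [div_le_iff₀ (by positivity)] at hs2
      linarith
    have hda : deriv a t * g t ≤ a t * ((a t * g t)/5) := by
      have h3 : deriv a t * g t ≤ (1/5) * (a t)^2 * g t :=
        mul_le_mul_of_nonneg_right hd1 hgt0.le
      have h4 : (1/5) * (a t)^2 * g t = a t * ((a t * g t)/5) := by ring
      linarith
    have hq : (a t * g t)/5 + 1 - (a t * g t)^2 ≤ -(1/5) := by
      nlinarith [mul_nonneg (by linarith : (0:ℝ) ≤ a t * g t - 6/5)
        (by linarith : (0:ℝ) ≤ a t * g t + 1)]
    have h5 : a t * ((a t * g t)/5 + 1 - (a t * g t)^2) ≤ a t * (-(1/5)) :=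
      mul_le_mul_of_nonneg_left hq hat.le
    have h6 : a t * (-(1/5)) ≤ -(6/25) := by linarith
    have h7 : deriv a t * g t + a t * (1 - (a t)^2 * (g t)^2)
        ≤ a t * ((a t * g t)/5 + 1 - (a t * g t)^2) := by nlinarith [hda]
    linarith
  have hstay : ∀ s, T₀ ≤ s → u s ≤ 6/5 → ∀ t, s ≤ t → u t ≤ 6/5 := by
    intro s hs hus t hst
    by_contra hut
    push_neg at hut
    have hspos : 0 < s := lt_of_lt_of_le hT₀pos hs
    set S := Set.Icc s t ∩ u ⁻¹' (Set.Iic (6/5)) with hSdef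
    have hSne : S.Nonempty := ⟨s, ⟨le_rfl, hst⟩, hus⟩
    have hSbdd : BddAbove S := ⟨t, fun r hr => hr.1.2⟩
    have hScl : IsClosed S := by
      have hcont : ContinuousOn u (Set.Icc s t) :=
        hu_contOn.mono (fun x hx => le_trans hspos.le hx.1)
      exact hcont.preimage_isClosed_of_isClosed isClosed_Icc isClosed_Iic
    have hr₀S : sSup S ∈ S := hScl.csSup_mem hSne hSbdd
    set r₀ := sSup S with hr₀def
    have hr₀t : r₀ ≤ t := hr₀S.1.2
    have hsr₀ : s ≤ r₀ := hr₀S.1.1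
    have hgtc : ∀ x, r₀ < x → x ≤ t → 6/5 < u x := by
      intro x hx1 hx2
      by_contra hch
      push_neg at hch
      have hxS : x ∈ S := ⟨⟨le_trans hsr₀ hx1.le, hx2⟩, hch⟩
      exact absurd (le_csSup hSbdd hxS) (not_le.mpr hx1)
    have hanti : AntitoneOn u (Set.Icc r₀ t) := by
      apply antitoneOn_of_deriv_nonpos (convex_Icc _ _)
      · exact hu_contOn.mono (fun x hx => le_trans (le_trans hspos.le hsr₀) hx.1)
      · intro x hx; rw [interior_Icc] at hx
        have hx0 : (0:ℝ) < x := lt_of_le_of_lt (le_trans hspos.le hsr₀) hx.1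
        exact (hu_deriv x hx0).differentiableAt.differentiableWithinAt
      · intro x hx; rw [interior_Icc] at hx
        have hx0 : (0:ℝ) < x := lt_of_le_of_lt (le_trans hspos.le hsr₀) hx.1
        rw [(hu_deriv x hx0).deriv]
        have hxT₀ : T₀ ≤ x := le_trans hs (le_trans hsr₀ hx.1.le)
        linarith [hkey x hxT₀ (hgtc x hx.1 hx.2.le).le]
    have hf1 := hanti (Set.left_mem_Icc.mpr hr₀t) (Set.right_mem_Icc.mpr hr₀t) hr₀t
    have := hr₀S.2
    simp only [Set.mem_preimage, Set.mem_Iic] at this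
    linarith
  have hreach : ∃ s, T₀ ≤ s ∧ s ≤ T₀ + (25/6)*(|u T₀| + 1) ∧ u s ≤ 6/5 := by
    by_contra hcon
    push_neg at hcon
    set T₁ := T₀ + (25/6)*(|u T₀| + 1) with hT₁def
    have hT₁ge : T₀ ≤ T₁ := by
      have := abs_nonneg (u T₀); rw [hT₁def]; linarith
    have hbig : ∀ x, T₀ ≤ x → x ≤ T₁ → 6/5 < u x := fun x h1 h2 => hcon x h1 h2
    have hanti : AntitoneOn (fun x => u x + (6/25)*x) (Set.Icc T₀ T₁) := by
      apply antitoneOn_of_deriv_nonpos (convex_Icc _ _)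
      · refine ((hu_contOn.mono (fun x hx => le_trans hT₀pos.le hx.1)).add ?_)
        exact (continuous_const.mul continuous_id).continuousOn
      · intro x hx; rw [interior_Icc] at hx
        have hx0 : (0:ℝ) < x := lt_of_lt_of_le hT₀pos hx.1.le
        have hw : HasDerivAt (fun y : ℝ => u y + (6/25)*y)
            ((deriv a x * g x + a x * (1 - (a x)^2 * (g x)^2)) + (6/25)*1) x :=
          (hu_deriv x hx0).add ((hasDerivAt_id x).const_mul _)
        exact hw.differentiableAt.differentiableWithinAt
      · intro x hx; rw [interior_Icc] at hx
        have hx0 : (0:ℝ) < x := lt_of_lt_of_le hT₀pos hx.1.le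
        have hw : HasDerivAt (fun y : ℝ => u y + (6/25)*y)
            ((deriv a x * g x + a x * (1 - (a x)^2 * (g x)^2)) + (6/25)*1) x :=
          (hu_deriv x hx0).add ((hasDerivAt_id x).const_mul _)
        rw [hw.deriv]
        have := hkey x hx.1.le (hbig x hx.1.le hx.2.le).le
        linarith
    have hf1 := hanti (Set.left_mem_Icc.mpr hT₁ge) (Set.right_mem_Icc.mpr hT₁ge) hT₁ge
    simp only at hf1
    have h1 := hbig T₁ hT₁ge le_rfl
    have h2 := le_abs_self (u T₀)
    rw [hT₁def] at hf1
    nlinarith [abs_nonneg (u T₀)]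
  obtain ⟨s₁, hs₁T, hs₁b, hs₁u⟩ := hreach
  set T₂ : ℝ := T₀ + (25/6)*(|u T₀| + 1) with hT₂def
  have hT₂ge : T₀ ≤ T₂ := by have := abs_nonneg (u T₀); rw [hT₂def]; linarith
  have hT₂small : ∀ t, T₂ ≤ t → u t ≤ 6/5 := fun t ht =>
    hstay s₁ hs₁T hs₁u t (le_trans hs₁b ht)
  have hA : ∃ A : ℝ, 0 ≤ A ∧ ∀ t ∈ Set.Icc (0:ℝ) T₂, a t ≤ A := by
    obtain ⟨C, hC⟩ := (isCompact_Icc : IsCompact (Set.Icc (0:ℝ) T₂)).exists_bound_of_continuousOn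
      had.continuous.continuousOn
    refine ⟨max C 0, le_max_right _ _, fun t ht => ?_⟩
    have := hC t ht
    rw [Real.norm_eq_abs] at this
    exact le_trans (le_abs_self _) (le_trans this (le_max_left _ _))
  obtain ⟨A, hA0, hAle⟩ := hA
  have hn1 : (1:ℝ) ≤ (n:ℝ) - 1 := by
    have h2n : (2:ℝ) ≤ (n:ℝ) := by exact_mod_cast hn
    linarith
  have hn1pos : (0:ℝ) < (n:ℝ) - 1 := by linarith
  obtain ⟨c₁, hc₁def⟩ : ∃ x : ℝ, x = 2*c + ((n:ℝ)-1)*A^2/(2*c) := ⟨_, rfl⟩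
  have hX0 : 0 ≤ ((n:ℝ)-1)*A^2/(2*c) :=
    div_nonneg (mul_nonneg (by linarith) (sq_nonneg _)) (by linarith)
  have hc₁pos : 0 < c₁ := by rw [hc₁def]; linarith
  have hc₁2c : 2*c ≤ c₁ := by rw [hc₁def]; linarith
  obtain ⟨k, hkdef⟩ : ∃ x : ℝ, x = c₁ / ((n:ℝ)-1) := ⟨_, rfl⟩
  have hkpos : 0 < k := by rw [hkdef]; exact div_pos hc₁pos hn1pos
  have hvfun : radialSubsolution c₁ n f = fun r => k * ∫ t in (0:ℝ)..r, g t := by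
    funext r
    simp only [radialSubsolution, hkdef, hgdef]
  have hv' : ∀ s : ℝ, 0 < s → HasDerivAt (radialSubsolution c₁ n f) (k * g s) s := by
    intro s hs
    rw [hvfun]
    exact (hF_deriv s hs).const_mul k
  have hv'eq : ∀ s : ℝ, 0 < s → deriv (radialSubsolution c₁ n f) s = k * g s :=
    fun s hs => (hv' s hs).deriv
  refine ⟨c₁, hc₁pos, ⟨k * ∫ t in Set.Ioi 0, g t, ?_⟩, ?_⟩
  · intro r hr
    have hFr : (0:ℝ) ≤ ∫ t in (0:ℝ)..r, g t :=
      intervalIntegral.integral_nonneg hr (fun x hx => hg_nonneg x hx.1)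
    have hmono : (∫ t in (0:ℝ)..r, g t) ≤ ∫ t in Set.Ioi 0, g t := by
      rw [intervalIntegral.integral_of_le hr]
      refine MeasureTheory.setIntegral_mono_set hIoi ?_ ?_
      · exact (MeasureTheory.ae_restrict_iff' measurableSet_Ioi).mpr
          (MeasureTheory.ae_of_all _ (fun x hx => (hg_pos x hx).le))
      · exact HasSubset.Subset.eventuallyLE Set.Ioc_subset_Ioi_self
    rw [hvfun]
    rw [abs_of_nonneg (mul_nonneg hkpos.le hFr)]
    exact mul_le_mul_of_nonneg_left hmono hkpos.le
  · intro r hr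
    have hv'' : deriv (deriv (radialSubsolution c₁ n f)) r
        = k * (1 - (a r)^2 * (g r)^2) := by
      have hev : deriv (radialSubsolution c₁ n f) =ᶠ[𝓝 r] fun s => k * g s :=
        Filter.eventuallyEq_of_mem (Ioi_mem_nhds hr) (fun s hs => hv'eq s hs)
      rw [hev.deriv_eq, ((hg_deriv r hr).const_mul k).deriv]
    rw [hv'eq r hr, hv'']
    have hfne : f r ≠ 0 := (hf_pos r hr).ne'
    have hf'ne : deriv f r ≠ 0 := (hf'_pos r hr.le).ne'
    have hgr : g r = f r / deriv f r := by rw [hgdef]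
    have hterm2 : ((n:ℝ)-1) * (deriv f r / f r) * (k * g r) = c₁ := by
      rw [hgr, hkdef]
      field_simp
    rw [hterm2]
    have hden : (0:ℝ) < 1 + (k * g r)^2 := by positivity
    have hc₁k : c₁ = k * ((n:ℝ)-1) := by
      rw [hkdef]; field_simp
    have hgoal : ∀ q X : ℝ, -q ≤ X → q ≤ c₁ - c → X + c₁ - c ≥ 0 := by
      intro q X h1 h2; linarith
    rcases le_or_gt T₂ r with hcase | hcase
    · have hur : a r * g r ≤ 6/5 := hT₂small r hcase
      have hu0 : 0 ≤ a r * g r := mul_nonneg (ha_nonneg r hr.le) (hg_nonneg r hr.le)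
      have hquot : -(c₁/2) ≤ k * (1 - (a r)^2 * (g r)^2) / (1 + (k * g r)^2) := by
        rw [le_div_iff₀ hden]
        have hd1 : (1:ℝ) ≤ 1 + (k * g r)^2 := by nlinarith [sq_nonneg (k * g r)]
        have hsq : (a r)^2 * (g r)^2 ≤ (6/5)^2 := by nlinarith
        have hnum : -(c₁/2) ≤ k * (1 - (a r)^2 * (g r)^2) := by nlinarith [hkpos.le, hn1]
        nlinarith [hnum, hd1, hc₁pos]
      exact hgoal (c₁/2) _ hquot (by linarith)
    · have haA : a r ≤ A := hAle r ⟨hr.le, hcase.le⟩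
      have ha0 : 0 ≤ a r := ha_nonneg r hr.le
      have haA2 : (a r)^2 ≤ A^2 := by nlinarith
      obtain ⟨q, hqdef⟩ : ∃ x : ℝ, x = ((n:ℝ)-1)*A^2/c₁ := ⟨_, rfl⟩
      have hq0 : 0 ≤ q := by
        rw [hqdef]
        exact div_nonneg (mul_nonneg (by linarith) (sq_nonneg _)) hc₁pos.le
      have hqk : q * k = A^2 := by
        rw [hqdef, hkdef]
        field_simp
      have hkey2 : q * (k * g r)^2 = A^2 * (k * (g r)^2) := by
        have h1 : q * (k * g r)^2 = (q * k) * (k * (g r)^2) := by ring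
        rw [h1, hqk]
      have hquot : -q ≤ k * (1 - (a r)^2 * (g r)^2) / (1 + (k * g r)^2) := by
        rw [le_div_iff₀ hden]
        have h2 : 0 ≤ k * (g r)^2 * (A^2 - (a r)^2) :=
          mul_nonneg (mul_nonneg hkpos.le (sq_nonneg _)) (sub_nonneg.mpr haA2)
        nlinarith [hkey2, h2, hq0, hkpos.le]
      have hqle : q ≤ ((n:ℝ)-1)*A^2/(2*c) := by
        rw [hqdef, div_le_div_iff₀ hc₁pos (by linarith : (0:ℝ) < 2*c)]
        have := mul_le_mul_of_nonneg_left hc₁2c (mul_nonneg (by linarith : (0:ℝ) ≤ (n:ℝ)-1) (sq_nonneg A))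
        linarith
      exact hgoal q _ hquot (by rw [hc₁def]; linarith)
end
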